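/- Fix n ≥ 1. In the formal power series ring ℤ[[t,v]] in two variables, let F_n = t · (1−tv)^{−1} · ∏_{k=1}^{n} (1−t^k v^{k−1})^{−1} (each factor has constant term 1 and hence is invertible). Then the coefficient of t^n v^{n−1} in F_n equals 1, and for every i ≥ n the coefficient of t^n v^i in F_n equals 0. (This is the computation, carried out in the proof of Corollary 5.4, showing that the generating function t/(1−tv) · ∏_{k≥1} 1/(1−t^k v^{k−1}) of Cheah's cell counts for the zero fibers Z_{n,n−1} has, for each n, a polynomial coefficient of t^n in v of degree exactly n−1; hence the zero fiber Z_{n,n−1} has dimension n−1.) -/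

import Mathlib

open MvPowerSeries Finset

noncomputable section

/-- The variable `t` in `ℤ[[t,v]]`. -/
def tP : MvPowerSeries (Fin 2) ℤ := MvPowerSeries.X 0

/-- The variable `v` in `ℤ[[t,v]]`. -/
def vP : MvPowerSeries (Fin 2) ℤ := MvPowerSeries.X 1

/-- `F_n = t·(1-tv)⁻¹·∏_{k=1}^{n}(1-t^k v^{k-1})⁻¹` in `ℤ[[t,v]]`; each factor has
constant term `1` and is inverted via `invOfUnit`. -/
def F (n : ℕ) : MvPowerSeries (Fin 2) ℤ :=
  tP * MvPowerSeries.invOfUnit (1 - tP * vP) 1 *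
    ∏ k ∈ Finset.range n,
      MvPowerSeries.invOfUnit (1 - tP ^ (k + 1) * vP ^ k) 1

/-!
Grade `ℤ[[t,v]]` by the weight `deg_t - deg_v`. Every factor `1/(1 - t^k v^(k-1))` is `1` plus
terms of positive weight, hence so is their product `Q`, while `1/(1 - tv) = ∑ (tv)^m` lives in
weight `0`. So in weight `≤ 0` the product `Q/(1 - tv)` has the coefficients of `1/(1 - tv)`,
and `t^n v^i` with `i ≥ n - 1` is `t` times a monomial of weight `≤ 0`.
-/

namespace MvPowerSeries

variable {σ R : Type*} [CommRing R]

theorem invOfUnit_one_sub_eq {f : MvPowerSeries σ R} (hf : constantCoeff f = 0) :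
    invOfUnit (1 - f) 1 = 1 + f * invOfUnit (1 - f) 1 := by
  have hc : constantCoeff (1 - f) = ((1 : Rˣ) : R) := by
    rw [map_sub, map_one, hf, sub_zero, Units.val_one]
  linear_combination mul_invOfUnit (1 - f) 1 hc

open scoped Classical in
theorem coeff_invOfUnit_one_sub_monomial {e : σ →₀ ℕ} (he : e ≠ 0) (d : σ →₀ ℕ) :
    coeff d (invOfUnit (1 - monomial e (1 : R)) 1) = if ∃ m : ℕ, m • e = d then 1 else 0 := by
  have hc : constantCoeff (monomial e (1 : R)) = 0 := by
    rw [← coeff_zero_eq_constantCoeff_apply, coeff_monomial, if_neg (Ne.symm he)]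
  induction d using WellFoundedLT.induction with
  | _ d ih =>
  rw [invOfUnit_one_sub_eq hc, map_add, coeff_monomial_mul, one_mul, coeff_one]
  by_cases hd : d = 0
  · have he0 : ¬ e ≤ 0 := fun h => he (le_antisymm h bot_le)
    rw [if_pos hd, hd, if_neg he0, add_zero, if_pos ⟨0, zero_smul ℕ e⟩]
  rw [if_neg hd, zero_add]
  by_cases hed : e ≤ d
  · have hlt : d - e < d := lt_of_le_of_ne tsub_le_self fun h => he (by
      rwa [tsub_eq_iff_eq_add_of_le hed, left_eq_add] at h)
    rw [if_pos hed, ih _ hlt]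
    congr 1
    refine propext ⟨fun ⟨m, hm⟩ => ⟨m + 1, by rw [succ_nsmul, hm, tsub_add_cancel_of_le hed]⟩, ?_⟩
    rintro ⟨_ | m, hm⟩
    · exact absurd (zero_smul ℕ e ▸ hm).symm hd
    · exact ⟨m, by rw [← hm, succ_nsmul, add_tsub_cancel_right]⟩
  · rw [if_neg hed, if_neg]
    rintro ⟨_ | m, hm⟩
    · exact absurd (zero_smul ℕ e ▸ hm).symm hd
    · exact hed (hm ▸ succ_nsmul e m ▸ le_add_self)

section Weight

variable {M : Type*} [AddCommGroup M] (w : (σ →₀ ℕ) →+ M)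

theorem coeff_one_eq_zero_of_weight_ne_zero {d : σ →₀ ℕ} (hd : w d ≠ 0) :
    coeff d (1 : MvPowerSeries σ R) = 0 := by
  classical
  rw [coeff_one, if_neg]
  rintro rfl
  exact hd (map_zero w)

variable [LinearOrder M] [IsOrderedAddMonoid M]

theorem coeff_mul_eq_zero_of_weight {φ ψ : MvPowerSeries σ R}
    (hφ : ∀ d, w d < 0 → coeff d φ = 0) (hψ : ∀ d, w d ≤ 0 → coeff d ψ = 0)
    {d : σ →₀ ℕ} (hd : w d ≤ 0) : coeff d (φ * ψ) = 0 := by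
  classical
  rw [coeff_mul]
  refine sum_eq_zero fun p hp => ?_
  rw [HasAntidiagonal.mem_antidiagonal] at hp
  rcases lt_or_ge (w p.1) 0 with hp₁ | hp₁
  · rw [hφ p.1 hp₁, zero_mul]
  · have hp₂ : w p.2 ≤ 0 := by
      rw [← hp, map_add] at hd
      exact le_of_add_le_of_nonneg_right hd hp₁
    rw [hψ p.2 hp₂, mul_zero]

theorem coeff_mul_eq_of_weight {φ ψ : MvPowerSeries σ R}
    (hφ : ∀ d, w d < 0 → coeff d φ = 0) (hψ : ∀ d, w d ≤ 0 → coeff d ψ = coeff d 1)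
    {d : σ →₀ ℕ} (hd : w d ≤ 0) : coeff d (φ * ψ) = coeff d φ := by
  have hψ' : ∀ d, w d ≤ 0 → coeff d (ψ - 1) = 0 := fun d hd => by
    rw [map_sub, hψ d hd, sub_self]
  rw [show φ * ψ = φ + φ * (ψ - 1) by ring, map_add,
    coeff_mul_eq_zero_of_weight w hφ hψ' hd, add_zero]

def oneAddPosWeight : Submonoid (MvPowerSeries σ R) where
  carrier := {φ | ∀ d, w d ≤ 0 → coeff d φ = coeff d 1}
  one_mem' _ _ := rfl
  mul_mem' {φ ψ} hφ hψ d hd := by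
    rw [coeff_mul_eq_of_weight w (fun d hd => ?_) hψ hd, hφ d hd]
    rw [hφ d hd.le, coeff_one_eq_zero_of_weight_ne_zero w hd.ne]

theorem invOfUnit_one_sub_mem_oneAddPosWeight {f : MvPowerSeries σ R}
    (hf : ∀ d, w d ≤ 0 → coeff d f = 0) :
    invOfUnit (1 - f) 1 ∈ oneAddPosWeight w := by
  classical
  have hP := invOfUnit_one_sub_eq (hf 0 (map_zero w).le)
  intro d
  induction d using WellFoundedLT.induction with
  | _ d ih =>
  intro hd
  rw [hP, map_add, add_eq_left, coeff_mul]
  refine sum_eq_zero fun p hp => ?_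
  rw [HasAntidiagonal.mem_antidiagonal] at hp
  rcases le_or_gt (w p.1) 0 with hp₁ | hp₁
  · rw [hf p.1 hp₁, zero_mul]
  · have hp₂ : w p.2 < 0 := by
      rw [← hp, map_add] at hd
      exact add_lt_iff_neg_left.mp (hd.trans_lt hp₁)
    have hlt : p.2 < d := by
      rw [← hp]
      refine lt_add_of_pos_left _ (pos_iff_ne_zero.mpr fun h => ?_)
      rw [h, map_zero] at hp₁
      exact hp₁.false
    rw [ih p.2 hlt hp₂.le, coeff_one_eq_zero_of_weight_ne_zero w hp₂.ne, mul_zero]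

end Weight

end MvPowerSeries

def tSubVWeight : (Fin 2 →₀ ℕ) →+ ℤ := Finsupp.weight ![1, -1]

theorem tSubVWeight_apply (d : Fin 2 →₀ ℕ) : tSubVWeight d = d 0 - d 1 := by
  simp [tSubVWeight, Finsupp.weight_eq_sum, Fin.sum_univ_two, sub_eq_add_neg]

theorem tSubVWeight_single_add_single (a b : ℕ) :
    tSubVWeight (Finsupp.single 0 a + Finsupp.single 1 b) = a - b := by
  simp [tSubVWeight_apply]

theorem tP_pow_mul_vP_pow (a b : ℕ) :
    tP ^ a * vP ^ b = monomial (Finsupp.single 0 a + Finsupp.single 1 b) 1 := by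
  simp only [tP, vP, X_pow_eq, monomial_mul_monomial, one_mul]

theorem coeff_single_add_tP_mul (d : Fin 2 →₀ ℕ) (φ : MvPowerSeries (Fin 2) ℤ) :
    coeff (Finsupp.single 0 1 + d) (tP * φ) = coeff d φ := by
  rw [tP, X_def, coeff_add_monomial_mul, one_mul]

theorem coeff_invOfUnit_one_sub_tP_mul_vP (d : Fin 2 →₀ ℕ) :
    coeff d (invOfUnit (1 - tP * vP) 1) = if d 0 = d 1 then 1 else 0 := by
  rw [← pow_one tP, ← pow_one vP, tP_pow_mul_vP_pow, coeff_invOfUnit_one_sub_monomial (by simp)]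
  congr 1
  refine propext ⟨?_, fun h => ⟨d 0, ?_⟩⟩
  · rintro ⟨m, rfl⟩
    simp
  · ext i
    fin_cases i <;> simp [h]

theorem prod_invOfUnit_mem_oneAddPosWeight (n : ℕ) :
    ∏ k ∈ range n, invOfUnit (1 - tP ^ (k + 1) * vP ^ k) 1 ∈ oneAddPosWeight tSubVWeight :=
  Submonoid.prod_mem _ fun k _ => by
    rw [tP_pow_mul_vP_pow]
    refine invOfUnit_one_sub_mem_oneAddPosWeight _ fun d hd => ?_
    rw [coeff_monomial, if_neg]
    rintro rfl
    rw [tSubVWeight_single_add_single] at hd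
    omega

theorem coeff_F {n : ℕ} (hn : 1 ≤ n) {i : ℕ} (hi : n - 1 ≤ i) :
    coeff (Finsupp.single 0 n + Finsupp.single 1 i) (F n) = if n - 1 = i then 1 else 0 := by
  obtain ⟨m, rfl⟩ : ∃ m, n = m + 1 := ⟨n - 1, by omega⟩
  have hweight : tSubVWeight (Finsupp.single 0 m + Finsupp.single 1 i) ≤ 0 := by
    rw [tSubVWeight_single_add_single]
    omega
  rw [F, mul_assoc, add_comm m, Finsupp.single_add, add_assoc, coeff_single_add_tP_mul,
    coeff_mul_eq_of_weight tSubVWeight _ (prod_invOfUnit_mem_oneAddPosWeight _) hweight,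
    coeff_invOfUnit_one_sub_tP_mul_vP]
  · simp
  · intro d hd
    rw [coeff_invOfUnit_one_sub_tP_mul_vP, if_neg]
    rw [tSubVWeight_apply] at hd
    omega

/-- The coefficient of `t^n v^{n-1}` in `F_n` equals `1`, and the coefficient of
`t^n v^i` vanishes for all `i ≥ n`: the coefficient of `t^n` in the generating
function of Cheah's cell counts for the zero fiber `Z_{n,n-1}` is a polynomial in
`v` of degree exactly `n-1`, so `Z_{n,n-1}` has dimension `n-1`. -/
theorem cheah_generating_function_degree (n : ℕ) (hn : 1 ≤ n) :
    (MvPowerSeries.coeff (Finsupp.single 0 n + Finsupp.single 1 (n - 1)) (F n) = 1) ∧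
    ∀ i : ℕ, n ≤ i →
      MvPowerSeries.coeff (Finsupp.single 0 n + Finsupp.single 1 i) (F n) = 0 := by
  refine ⟨by simpa using coeff_F hn le_rfl, fun i hi => ?_⟩
  rw [coeff_F hn (by omega), if_neg (by omega)]
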